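/- Let Λ be a finite nonempty type, d ≥ 1, B : Λ → Λ → Matrix (Fin d) (Fin d) ℂ, and ρ : Λ → Matrix (Fin d) (Fin d) ℂ with each ρ_j positive semidefinite and Tr(ρ_j) a positive real. Set M_j^i := B_j^i ⊗ₖ E_{ij} and φ_{jj'}(b) := ((Tr ρ_j)^{1/2} (Tr ρ_{j'})^{1/2})⁻¹ · Tr(((ρ_j^{1/2} * ρ_{j'}^{1/2}) ⊗ₖ E_{j' j}) * b). Then for every k ≥ 1 and every a ∈ Matrix (Fin d × Λ) (Fin d × Λ) ℂ, the forward Markov operator satisfies: ∑_{i,j,j'∈Λ} (φ_{jj'}(1))^k • ((M_j^i)ᴴ * a * M_{j'}^i) = ∑_{i,j∈Λ} (M_j^i)ᴴ * a * M_j^i. -/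

import Mathlib

open Matrix Kronecker
open scoped ComplexOrder

/-- The old Mathlib `Matrix.PosSemidef.sqrt` (removed upstream), restored with its old definition. -/
noncomputable def Matrix.PosSemidef.sqrt {n : Type*} [Fintype n] [DecidableEq n] {𝕜 : Type*} [RCLike 𝕜]
    {A : Matrix n n 𝕜} (hA : A.PosSemidef) : Matrix n n 𝕜 :=
  hA.1.eigenvectorUnitary.1 * diagonal ((↑) ∘ Real.sqrt ∘ hA.1.eigenvalues) *
    (star hA.1.eigenvectorUnitary : Matrix n n 𝕜)

/-- The functional `φ_{jj'}(b) = ((Tr ρ_j)^{1/2}(Tr ρ_{j'})^{1/2})⁻¹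
Tr((ρ_j^{1/2} ρ_{j'}^{1/2} ⊗ₖ E_{j'j}) b)`. -/
noncomputable def phiJJ {Λ : Type*} [Fintype Λ] [DecidableEq Λ] {d : ℕ}
    (ρ : Λ → Matrix (Fin d) (Fin d) ℂ) (hρ : ∀ j, (ρ j).PosSemidef) (j j' : Λ)
    (b : Matrix (Fin d × Λ) (Fin d × Λ) ℂ) : ℂ :=
  ((Real.sqrt (ρ j).trace.re * Real.sqrt (ρ j').trace.re : ℝ) : ℂ)⁻¹ *
    ((((hρ j).sqrt * (hρ j').sqrt) ⊗ₖ Matrix.single j' j (1 : ℂ)) * b).trace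

/-- The dilated operator `M_j^i = B_j^i ⊗ₖ E_{ij}`. -/
noncomputable def Mop {Λ : Type*} [Fintype Λ] [DecidableEq Λ] {d : ℕ}
    (B : Λ → Λ → Matrix (Fin d) (Fin d) ℂ) (j i : Λ) :
    Matrix (Fin d × Λ) (Fin d × Λ) ℂ :=
  B j i ⊗ₖ Matrix.single i j (1 : ℂ)

/-! `φ_{jj'}(1)` is the Kronecker delta: `Tr(E_{j'j}) = δ_{jj'}`, and on the diagonal
`Tr(ρ_j^{1/2} ρ_j^{1/2}) = Tr ρ_j` cancels the normalisation. Hence for `k ≥ 1` only the terms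
`j' = j` survive in the triple sum. -/

theorem Matrix.PosSemidef.sqrt_mul_self {n : Type*} [Fintype n] [DecidableEq n] {𝕜 : Type*}
    [RCLike 𝕜] {A : Matrix n n 𝕜} (hA : A.PosSemidef) : hA.sqrt * hA.sqrt = A := by
  set U : Matrix n n 𝕜 := hA.1.eigenvectorUnitary.1
  have hU : star U * U = 1 := Unitary.coe_star_mul_self _
  have hD : diagonal ((↑) ∘ Real.sqrt ∘ hA.1.eigenvalues : n → 𝕜) *
      diagonal ((↑) ∘ Real.sqrt ∘ hA.1.eigenvalues) = diagonal ((↑) ∘ hA.1.eigenvalues) := by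
    rw [diagonal_mul_diagonal]
    congr 1
    funext i
    simp only [Function.comp_apply, ← RCLike.ofReal_mul,
      Real.mul_self_sqrt (hA.eigenvalues_nonneg i)]
  conv_rhs => rw [hA.1.spectral_theorem, Unitary.conjStarAlgAut_apply]
  simp only [PosSemidef.sqrt, Matrix.mul_assoc]
  rw [← Matrix.mul_assoc _ U, hU, Matrix.one_mul, ← Matrix.mul_assoc (diagonal _), hD]

section TransitionExpectation

variable {Λ : Type*} [Fintype Λ] [DecidableEq Λ] {d : ℕ}
  (ρ : Λ → Matrix (Fin d) (Fin d) ℂ) (hρ : ∀ j, (ρ j).PosSemidef)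

theorem phiJJ_self_one {j : Λ} (hTr : 0 < (ρ j).trace) : phiJJ ρ hρ j j 1 = 1 := by
  have hre : (((ρ j).trace.re : ℝ) : ℂ) = (ρ j).trace :=
    (Complex.eq_re_of_ofReal_le (r := 0) (by simpa using hTr.le)).symm
  rw [phiJJ, Matrix.mul_one, trace_kronecker, trace_single_eq_same, (hρ j).sqrt_mul_self,
    mul_one, Real.mul_self_sqrt (Complex.pos_iff.mp hTr).1.le, hre]
  exact inv_mul_cancel₀ hTr.ne'

theorem phiJJ_one_of_ne {j j' : Λ} (h : j ≠ j') : phiJJ ρ hρ j j' 1 = 0 := by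
  rw [phiJJ, Matrix.mul_one, trace_kronecker, trace_single_eq_of_ne _ _ _ h.symm, mul_zero,
    mul_zero]

end TransitionExpectation

theorem stmt_10_general {Λ : Type*} [Fintype Λ] [DecidableEq Λ] {d : ℕ}
    (B : Λ → Λ → Matrix (Fin d) (Fin d) ℂ)
    (ρ : Λ → Matrix (Fin d) (Fin d) ℂ) (hρ : ∀ j, (ρ j).PosSemidef)
    (hTr : ∀ j, 0 < (ρ j).trace) (k : ℕ) (hk : 1 ≤ k)
    (a : Matrix (Fin d × Λ) (Fin d × Λ) ℂ) :
    ∑ i : Λ, ∑ j : Λ, ∑ j' : Λ,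
        (phiJJ ρ hρ j j' 1) ^ k • ((Mop B j i)ᴴ * a * Mop B j' i) =
      ∑ i : Λ, ∑ j : Λ, (Mop B j i)ᴴ * a * Mop B j i := by
  refine Finset.sum_congr rfl fun i _ => Finset.sum_congr rfl fun j _ => ?_
  rw [Finset.sum_eq_single_of_mem j (Finset.mem_univ j) fun j' _ hne => by
      rw [phiJJ_one_of_ne ρ hρ (Ne.symm hne), zero_pow (by omega), zero_smul],
    phiJJ_self_one ρ hρ (hTr j), one_pow, one_smul]

/-- the forward Markov operator of the transition expectation satisfies
`T(a) = ∑ i j, (M_j^i)ᴴ a M_j^i`: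
`∑ i j j', (φ_{jj'}(1))^k • ((M_j^i)ᴴ a M_{j'}^i) = ∑ i j, (M_j^i)ᴴ a M_j^i`. -/
theorem stmt_10 {Λ : Type*} [Fintype Λ] [DecidableEq Λ] [Nonempty Λ] {d : ℕ} (hd : 1 ≤ d)
    (B : Λ → Λ → Matrix (Fin d) (Fin d) ℂ)
    (ρ : Λ → Matrix (Fin d) (Fin d) ℂ) (hρ : ∀ j, (ρ j).PosSemidef)
    (hTr : ∀ j, 0 < (ρ j).trace) (k : ℕ) (hk : 1 ≤ k)
    (a : Matrix (Fin d × Λ) (Fin d × Λ) ℂ) :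
    ∑ i : Λ, ∑ j : Λ, ∑ j' : Λ,
        (phiJJ ρ hρ j j' 1) ^ k • ((Mop B j i)ᴴ * a * Mop B j' i) =
      ∑ i : Λ, ∑ j : Λ, (Mop B j i)ᴴ * a * Mop B j i :=
  stmt_10_general B ρ hρ hTr k hk a
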